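/- arXiv:2605.31388 — 4 statements merged into one kernel-verified Lean document; each statement's English description precedes it below -/
import Mathlib

section
/- In the finite soft MOMDP setup, the fixed-point map of the soft Bellman operator is convex in the parameter: if θ, θ' ∈ ℝ^n, t ∈ [0,1], and v, v', v'' : S → ℝ satisfy v = T_θ v, v' = T_{θ'} v', and v'' = T_{tθ+(1−t)θ'} v'', then for every state s, v''(s) ≤ t·v(s) + (1−t)·v'(s). -/
/-- The soft (entropy-regularized) Bellman operator of a finite multi-objective MDP:
`(T_θ v)(s) = β log Σ_a exp((⟨θ, r(s,a)⟩ + γ Σ_{s'} T(s'|s,a) v(s'))/β)`. -/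
noncomputable def softBellman {p n : ℕ} {A : Type*} [Fintype A]
    (T : Fin p → A → Fin p → ℝ) (γ β : ℝ) (r : Fin p → A → Fin n → ℝ)
    (θ : Fin n → ℝ) (v : Fin p → ℝ) : Fin p → ℝ :=
  fun s => β * Real.log (∑ a : A, Real.exp
    ((∑ i, θ i * r s a i + γ * ∑ s', T s a s' * v s') / β))

/-!
The map `(θ, v) ↦ T_θ v (s)` is jointly convex: it is `β` times log-sum-exp, a convex function,
of soft Q-values that are linear in `(θ, v)`. Hence `w = t v + (1 - t) v'` is a supersolution,
`T_{tθ+(1-t)θ'} w ≤ w`. The soft Bellman operator is monotone and shifts constants by the factor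
`γ < 1`, so the largest gap `M = max (v'' - w)` between its fixed point and `w` satisfies
`M ≤ γ M`, i.e. `M ≤ 0`.
-/

open Finset Real

noncomputable def logSumExp {ι : Type*} [Fintype ι] (x : ι → ℝ) : ℝ :=
  log (∑ i, exp (x i))

section LogSumExp

variable {ι : Type*} [Fintype ι] [Nonempty ι]

lemma sum_exp_pos (x : ι → ℝ) : 0 < ∑ i, exp (x i) :=
  sum_pos (fun _ _ => exp_pos _) univ_nonempty

lemma logSumExp_mono {x y : ι → ℝ} (h : x ≤ y) : logSumExp x ≤ logSumExp y :=
  log_le_log (sum_exp_pos x) (sum_le_sum fun i _ => exp_le_exp.2 (h i))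

lemma logSumExp_add_const (x : ι → ℝ) (c : ℝ) :
    logSumExp (fun i => x i + c) = logSumExp x + c := by
  simp only [logSumExp, exp_add, ← sum_mul]
  rw [log_mul (sum_exp_pos x).ne' (exp_ne_zero c), log_exp]

lemma sum_exp_sub_logSumExp (x : ι → ℝ) : ∑ i, exp (x i - logSumExp x) = 1 := by
  simp only [exp_sub, logSumExp, exp_log (sum_exp_pos x), ← sum_div]
  exact div_self (sum_exp_pos x).ne'

-- After normalising by the log-partition functions, convexity of `exp` bounds the weights of
-- the combination by a convex combination of two probability vectors, whose total is `1`.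
theorem convexOn_logSumExp : ConvexOn ℝ Set.univ (logSumExp : (ι → ℝ) → ℝ) := by
  refine ⟨convex_univ, fun x _ y _ a b ha hb hab => ?_⟩
  set c := a * logSumExp x + b * logSumExp y
  have hweights : ∑ i, exp ((a • x + b • y) i - c) ≤ 1 := calc
    ∑ i, exp ((a • x + b • y) i - c)
        = ∑ i, exp (a • (x i - logSumExp x) + b • (y i - logSumExp y)) := by
          congr! 2 with i; simp only [Pi.add_apply, Pi.smul_apply, smul_eq_mul, c]; ring
    _ ≤ ∑ i, (a • exp (x i - logSumExp x) + b • exp (y i - logSumExp y)) :=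
          sum_le_sum fun i _ => convexOn_exp.2 (Set.mem_univ _) (Set.mem_univ _) ha hb hab
    _ = 1 := by
          simp only [smul_eq_mul, sum_add_distrib, ← mul_sum, sum_exp_sub_logSumExp, mul_one, hab]
  calc logSumExp (a • x + b • y)
      = logSumExp (fun i => (a • x + b • y) i - c) + c := by
        rw [← logSumExp_add_const (fun i => (a • x + b • y) i - c)]
        simp only [sub_add_cancel]
    _ ≤ c := by
        have : logSumExp (fun i => (a • x + b • y) i - c) ≤ 0 :=
          log_nonpos (sum_exp_pos _).le hweights
        linarith
    _ = a • logSumExp x + b • logSumExp y := rfl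

end LogSumExp

theorem Function.IsFixedPt.le_of_map_le {ι : Type*} [Fintype ι] {F : (ι → ℝ) → ι → ℝ}
    {γ : ℝ} (hγ : γ < 1) (hF : Monotone F)
    (hshift : ∀ u c, F (u + fun _ => c) = F u + fun _ => γ * c)
    {x w : ι → ℝ} (hx : IsFixedPt F x) (hw : F w ≤ w) : x ≤ w := by
  cases isEmpty_or_nonempty ι
  · exact fun i => isEmptyElim i
  obtain ⟨i₀, -, hi₀⟩ := exists_max_image univ (fun i => x i - w i) univ_nonempty
  set M := x i₀ - w i₀
  have hxM : x ≤ w + fun _ => M := fun i => by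
    simp only [Pi.add_apply]; linarith [hi₀ i (mem_univ i)]
  have hxγM : x ≤ w + fun _ => γ * M := calc
    x = F x := hx.symm
    _ ≤ F (w + fun _ => M) := hF hxM
    _ = F w + fun _ => γ * M := hshift w M
    _ ≤ w + fun _ => γ * M := add_le_add_left hw _
  have hM : M ≤ 0 := by
    have := hxγM i₀
    simp only [Pi.add_apply] at this
    nlinarith
  exact fun i => by linarith [hi₀ i (mem_univ i)]

section SoftBellman

variable {p n : ℕ} {A : Type*} [Fintype A] (T : Fin p → A → Fin p → ℝ) (γ β : ℝ)
  (r : Fin p → A → Fin n → ℝ)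

lemma softBellman_apply (θ : Fin n → ℝ) (v : Fin p → ℝ) (s : Fin p) :
    softBellman T γ β r θ v s =
      β * logSumExp (fun a => (∑ i, θ i * r s a i + γ * ∑ s', T s a s' * v s') / β) :=
  rfl

lemma softBellman_monotone [Nonempty A] (hT0 : ∀ s a s', 0 ≤ T s a s') (hγ : 0 ≤ γ)
    (hβ : 0 < β) (θ : Fin n → ℝ) : Monotone (softBellman T γ β r θ) := fun v w hvw s => by
  simp only [softBellman_apply]
  refine mul_le_mul_of_nonneg_left (logSumExp_mono fun a => ?_) hβ.le
  gcongr with s'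
  · exact hT0 s a s'
  · exact hvw s'

lemma softBellman_add_const [Nonempty A] (hT1 : ∀ s a, ∑ s', T s a s' = 1) (hβ : β ≠ 0)
    (θ : Fin n → ℝ) (v : Fin p → ℝ) (c : ℝ) :
    softBellman T γ β r θ (v + fun _ => c) = softBellman T γ β r θ v + fun _ => γ * c := by
  funext s
  have hQ : ∀ a, (∑ i, θ i * r s a i + γ * ∑ s', T s a s' * (v s' + c)) / β
      = (∑ i, θ i * r s a i + γ * ∑ s', T s a s' * v s') / β + γ * c / β := fun a => by
    simp only [mul_add, sum_add_distrib, ← sum_mul, hT1, one_mul]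
    ring
  simp only [Pi.add_apply, softBellman_apply, hQ, logSumExp_add_const]
  field_simp

lemma softBellman_convexOn [Nonempty A] (hβ : 0 ≤ β) (s : Fin p) :
    ConvexOn ℝ Set.univ fun x : (Fin n → ℝ) × (Fin p → ℝ) => softBellman T γ β r x.1 x.2 s := by
  refine ⟨convex_univ, fun x _ y _ a b ha hb hab => ?_⟩
  let Q : (Fin n → ℝ) × (Fin p → ℝ) → A → ℝ := fun z act =>
    (∑ i, z.1 i * r s act i + γ * ∑ s', T s act s' * z.2 s') / β
  have hQ : Q (a • x + b • y) = a • Q x + b • Q y := by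
    funext act
    simp only [Q, Prod.fst_add, Prod.snd_add, Prod.smul_fst, Prod.smul_snd, Pi.add_apply,
      Pi.smul_apply, smul_eq_mul, add_mul, mul_add, sum_add_distrib, mul_assoc,
      mul_left_comm (T s act _), ← mul_sum]
    ring
  calc softBellman T γ β r (a • x + b • y).1 (a • x + b • y).2 s
      = β * logSumExp (a • Q x + b • Q y) := by rw [softBellman_apply, ← hQ]
    _ ≤ β * (a • logSumExp (Q x) + b • logSumExp (Q y)) := by
      gcongr
      exact convexOn_logSumExp.2 (Set.mem_univ _) (Set.mem_univ _) ha hb hab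
    _ = a • softBellman T γ β r x.1 x.2 s + b • softBellman T γ β r y.1 y.2 s := by
      simp only [smul_eq_mul, softBellman_apply, Q]
      ring

end SoftBellman

/-- Convexity of the soft fixed point in the parameter `θ`: if `v`, `v'`, `v''` are the
fixed points of the soft Bellman operators at parameters `θ`, `θ'`, `t θ + (1-t) θ'`
respectively, then `v''(s) ≤ t v(s) + (1-t) v'(s)` for every state `s`. -/
theorem stmt_2 {p n : ℕ} {A : Type*} [Fintype A] [Nonempty A]
    (T : Fin p → A → Fin p → ℝ)
    (hT0 : ∀ s a s', 0 ≤ T s a s') (hT1 : ∀ s a, ∑ s', T s a s' = 1)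
    (γ : ℝ) (hγ0 : 0 ≤ γ) (hγ1 : γ < 1)
    (β : ℝ) (hβ : 0 < β)
    (r : Fin p → A → Fin n → ℝ)
    (θ θ' : Fin n → ℝ) (t : ℝ) (ht0 : 0 ≤ t) (ht1 : t ≤ 1)
    (v v' v'' : Fin p → ℝ)
    (hv : v = softBellman T γ β r θ v)
    (hv' : v' = softBellman T γ β r θ' v')
    (hv'' : v'' = softBellman T γ β r (t • θ + (1 - t) • θ') v'') :
    ∀ s, v'' s ≤ t * v s + (1 - t) * v' s := by
  have hsub : softBellman T γ β r (t • θ + (1 - t) • θ') (t • v + (1 - t) • v')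
      ≤ t • v + (1 - t) • v' := fun s => by
    have := (softBellman_convexOn T γ β r hβ.le s).2 (Set.mem_univ (θ, v)) (Set.mem_univ (θ', v'))
      ht0 (sub_nonneg.2 ht1) (add_sub_cancel t 1)
    simpa [← hv, ← hv'] using this
  exact Function.IsFixedPt.le_of_map_le hγ1 (softBellman_monotone T γ β r hT0 hγ0 hβ _)
    (softBellman_add_const T γ β r hT1 hβ.ne' _) hv''.symm hsub
end

section
/- In the finite soft MOMDP setup with n = L + K and a parameter θ = (u,w) ∈ ℝ^L × ℝ^K, let μ0 : S → ℝ be an initial distribution (μ0 ≥ 0, Σ_s μ0(s) = 1) and C ∈ ℝ^L a threshold vector. Then the function L(u,w) = Σ_s μ0(s)·v*_{(u,w)}(s) − Σ_{l=1}^L u_l·C_l, where v*_{(u,w)} is the unique fixed point of the soft Bellman operator T_{(u,w)}, is a convex function of (u,w) on ℝ^{L+K}. -/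
/-- Hölder: `Σ f_i^a g_i^b ≤ (Σ f)^a (Σ g)^b` for positive `f, g`. -/
lemma holder_two {A : Type*} [Fintype A] [Nonempty A] (f g : A → ℝ)
    (hf : ∀ i, 0 < f i) (hg : ∀ i, 0 < g i) {a b : ℝ} (ha : 0 ≤ a) (hb : 0 ≤ b)
    (hab : a + b = 1) :
    ∑ i, f i ^ a * g i ^ b ≤ (∑ i, f i) ^ a * (∑ i, g i) ^ b := by
  have hP : 0 < ∑ i, f i := Finset.sum_pos (fun i _ => hf i) Finset.univ_nonempty
  have hQ : 0 < ∑ i, g i := Finset.sum_pos (fun i _ => hg i) Finset.univ_nonempty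
  have key : ∀ i : A, f i ^ a * g i ^ b ≤
      (a * (f i / (∑ j, f j)) + b * (g i / (∑ j, g j))) * ((∑ j, f j) ^ a * (∑ j, g j) ^ b) := by
    intro i
    have h := Real.geom_mean_le_arith_mean2_weighted ha hb
      (le_of_lt (div_pos (hf i) hP)) (le_of_lt (div_pos (hg i) hQ)) hab
    have h1 : (f i / ∑ j, f j) ^ a * (g i / ∑ j, g j) ^ b
        = f i ^ a * g i ^ b / ((∑ j, f j) ^ a * (∑ j, g j) ^ b) := by
      rw [Real.div_rpow (le_of_lt (hf i)) (le_of_lt hP),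
        Real.div_rpow (le_of_lt (hg i)) (le_of_lt hQ)]
      ring
    rw [h1, div_le_iff₀ (by positivity)] at h
    linarith
  calc ∑ i, f i ^ a * g i ^ b
      ≤ ∑ i, (a * (f i / (∑ j, f j)) + b * (g i / (∑ j, g j)))
          * ((∑ j, f j) ^ a * (∑ j, g j) ^ b) :=
        Finset.sum_le_sum fun i _ => key i
    _ = (∑ i, (a * (f i / (∑ j, f j)) + b * (g i / (∑ j, g j))))
          * ((∑ j, f j) ^ a * (∑ j, g j) ^ b) := by rw [← Finset.sum_mul]
    _ = (∑ j, f j) ^ a * (∑ j, g j) ^ b := by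
        have : (∑ i, (a * (f i / (∑ j, f j)) + b * (g i / (∑ j, g j)))) = 1 := by
          rw [Finset.sum_add_distrib, ← Finset.mul_sum, ← Finset.mul_sum,
            ← Finset.sum_div, ← Finset.sum_div, div_self (ne_of_gt hP),
            div_self (ne_of_gt hQ), mul_one, mul_one, hab]
        rw [this, one_mul]

/-- log-sum-exp convexity (two-point form). -/
lemma lse_convex {A : Type*} [Fintype A] [Nonempty A] {β : ℝ} (hβ : 0 < β)
    (x y : A → ℝ) {a b : ℝ} (ha : 0 ≤ a) (hb : 0 ≤ b) (hab : a + b = 1) :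
    β * Real.log (∑ i, Real.exp ((a * x i + b * y i) / β)) ≤
      a * (β * Real.log (∑ i, Real.exp (x i / β)))
        + b * (β * Real.log (∑ i, Real.exp (y i / β))) := by
  have hP : 0 < ∑ i, Real.exp (x i / β) :=
    Finset.sum_pos (fun i _ => Real.exp_pos _) Finset.univ_nonempty
  have hQ : 0 < ∑ i, Real.exp (y i / β) :=
    Finset.sum_pos (fun i _ => Real.exp_pos _) Finset.univ_nonempty
  have hterm : ∀ i : A, Real.exp ((a * x i + b * y i) / β)
      = Real.exp (x i / β) ^ a * Real.exp (y i / β) ^ b := by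
    intro i
    rw [← Real.exp_mul (x i / β) a, ← Real.exp_mul (y i / β) b, ← Real.exp_add]
    congr 1
    field_simp
  have h := holder_two (fun i => Real.exp (x i / β)) (fun i => Real.exp (y i / β))
    (fun i => Real.exp_pos _) (fun i => Real.exp_pos _) ha hb hab
  have hsum : ∑ i, Real.exp ((a * x i + b * y i) / β)
      ≤ (∑ i, Real.exp (x i / β)) ^ a * (∑ i, Real.exp (y i / β)) ^ b := by
    calc ∑ i, Real.exp ((a * x i + b * y i) / β)
        = ∑ i, Real.exp (x i / β) ^ a * Real.exp (y i / β) ^ b :=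
          Finset.sum_congr rfl fun i _ => hterm i
      _ ≤ _ := h
  have hlog := Real.log_le_log (Finset.sum_pos (fun i _ => Real.exp_pos _)
    Finset.univ_nonempty) hsum
  rw [Real.log_mul (by positivity) (by positivity), Real.log_rpow hP, Real.log_rpow hQ] at hlog
  nlinarith [hlog, hβ]

/-- Joint convexity of the soft Bellman operator in `(θ, v)`. -/
lemma softBellman_jointly_convex {p n : ℕ} {A : Type*} [Fintype A] [Nonempty A]
    (T : Fin p → A → Fin p → ℝ) (γ : ℝ) {β : ℝ} (hβ : 0 < β)
    (r : Fin p → A → Fin n → ℝ) (θ₁ θ₂ : Fin n → ℝ) (v₁ v₂ : Fin p → ℝ)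
    {a b : ℝ} (ha : 0 ≤ a) (hb : 0 ≤ b) (hab : a + b = 1) (s : Fin p) :
    softBellman T γ β r (a • θ₁ + b • θ₂) (a • v₁ + b • v₂) s ≤
      a * softBellman T γ β r θ₁ v₁ s + b * softBellman T γ β r θ₂ v₂ s := by
  unfold softBellman
  have harg : ∀ α : A,
      (∑ i, (a • θ₁ + b • θ₂) i * r s α i + γ * ∑ s', T s α s' * (a • v₁ + b • v₂) s')
      = a * (∑ i, θ₁ i * r s α i + γ * ∑ s', T s α s' * v₁ s')
        + b * (∑ i, θ₂ i * r s α i + γ * ∑ s', T s α s' * v₂ s') := by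
    intro α
    simp only [Pi.add_apply, Pi.smul_apply, smul_eq_mul]
    rw [show ∀ u w : Fin n → ℝ, (∑ i, (a * u i + b * w i) * r s α i)
      = a * ∑ i, u i * r s α i + b * ∑ i, w i * r s α i from fun u w => by
        rw [Finset.mul_sum, Finset.mul_sum, ← Finset.sum_add_distrib]
        exact Finset.sum_congr rfl fun i _ => by ring]
    rw [show (∑ s', T s α s' * (a * v₁ s' + b * v₂ s'))
      = a * ∑ s', T s α s' * v₁ s' + b * ∑ s', T s α s' * v₂ s' from by
        rw [Finset.mul_sum, Finset.mul_sum, ← Finset.sum_add_distrib]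
        exact Finset.sum_congr rfl fun s' _ => by ring]
    ring
  simp only [harg]
  exact lse_convex hβ _ _ ha hb hab

/-- Monotone-with-shift property of the soft Bellman operator. -/
lemma softBellman_shift {p n : ℕ} {A : Type*} [Fintype A] [Nonempty A]
    (T : Fin p → A → Fin p → ℝ) (hT0 : ∀ s a s', 0 ≤ T s a s')
    (hT1 : ∀ s a, ∑ s', T s a s' = 1) {γ : ℝ} (hγ0 : 0 ≤ γ) {β : ℝ} (hβ : 0 < β)
    (r : Fin p → A → Fin n → ℝ) (θ : Fin n → ℝ) (v₁ v₂ : Fin p → ℝ) (c : ℝ)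
    (hle : ∀ s', v₁ s' ≤ v₂ s' + c) (s : Fin p) :
    softBellman T γ β r θ v₁ s ≤ softBellman T γ β r θ v₂ s + γ * c := by
  unfold softBellman
  have harg : ∀ α : A,
      (∑ i, θ i * r s α i + γ * ∑ s', T s α s' * v₁ s')
      ≤ (∑ i, θ i * r s α i + γ * ∑ s', T s α s' * v₂ s') + γ * c := by
    intro α
    have h1 : ∑ s', T s α s' * v₁ s' ≤ ∑ s', T s α s' * v₂ s' + c := by
      calc ∑ s', T s α s' * v₁ s' ≤ ∑ s', T s α s' * (v₂ s' + c) :=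
            Finset.sum_le_sum fun s' _ =>
              mul_le_mul_of_nonneg_left (hle s') (hT0 s α s')
        _ = ∑ s', T s α s' * v₂ s' + c := by
            rw [show ∀ f g : Fin p → ℝ, (∑ s', T s α s' * (v₂ s' + c))
              = ∑ s', T s α s' * v₂ s' + ∑ s', T s α s' * c from fun _ _ => by
                rw [← Finset.sum_add_distrib]
                exact Finset.sum_congr rfl fun s' _ => by ring]
            · rw [← Finset.sum_mul, hT1 s α, one_mul]
            · exact v₁
            · exact v₂
    nlinarith [mul_le_mul_of_nonneg_left h1 hγ0]
  have hsum : (∑ α : A, Real.exp ((∑ i, θ i * r s α i + γ * ∑ s', T s α s' * v₁ s') / β))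
      ≤ ∑ α : A, Real.exp (((∑ i, θ i * r s α i + γ * ∑ s', T s α s' * v₂ s') + γ * c) / β) :=
    Finset.sum_le_sum fun α _ => Real.exp_le_exp.2 (by
      gcongr ?_ / β
      exact harg α)
  have hpos : (0:ℝ) < ∑ α : A, Real.exp ((∑ i, θ i * r s α i + γ * ∑ s', T s α s' * v₁ s') / β) :=
    Finset.sum_pos (fun α _ => Real.exp_pos _) Finset.univ_nonempty
  have hlog := Real.log_le_log hpos hsum
  have hfac : ∀ α : A, Real.exp (((∑ i, θ i * r s α i + γ * ∑ s', T s α s' * v₂ s') + γ * c) / β)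
      = Real.exp (γ * c / β) * Real.exp ((∑ i, θ i * r s α i + γ * ∑ s', T s α s' * v₂ s') / β) := by
    intro α
    rw [← Real.exp_add]
    congr 1
    field_simp
    ring
  rw [Finset.sum_congr rfl (fun α _ => hfac α), ← Finset.mul_sum,
    Real.log_mul (by positivity) (by positivity), Real.log_exp] at hlog
  have := mul_le_mul_of_nonneg_left hlog (le_of_lt hβ)
  calc β * Real.log (∑ α : A, Real.exp ((∑ i, θ i * r s α i + γ * ∑ s', T s α s' * v₁ s') / β))
      ≤ β * (γ * c / β + Real.log (∑ α : A, Real.exp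
        ((∑ i, θ i * r s α i + γ * ∑ s', T s α s' * v₂ s') / β))) := this
    _ = β * Real.log (∑ α : A, Real.exp
        ((∑ i, θ i * r s α i + γ * ∑ s', T s α s' * v₂ s') / β)) + γ * c := by
        field_simp; ring

/-- Convexity of the dual objective: with `n = L + K`, parameter `θ = (u, w)` (the first
`L` coordinates of `θ` are `u`), initial distribution `μ0`, thresholds `C ∈ ℝ^L`, and
`V θ` the fixed point of the soft Bellman operator `T_θ`, the function
`L(u,w) = Σ_s μ0(s) V(u,w)(s) − Σ_l u_l C_l` is convex on `ℝ^{L+K}`. -/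
theorem stmt_3 {p L K : ℕ} {A : Type*} [Fintype A] [Nonempty A]
    (T : Fin p → A → Fin p → ℝ)
    (hT0 : ∀ s a s', 0 ≤ T s a s') (hT1 : ∀ s a, ∑ s', T s a s' = 1)
    (γ : ℝ) (hγ0 : 0 ≤ γ) (hγ1 : γ < 1)
    (β : ℝ) (hβ : 0 < β)
    (r : Fin p → A → Fin (L + K) → ℝ)
    (μ0 : Fin p → ℝ) (hμ0 : ∀ s, 0 ≤ μ0 s) (hμ1 : ∑ s, μ0 s = 1)
    (C : Fin L → ℝ)
    (V : (Fin (L + K) → ℝ) → Fin p → ℝ)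
    (hV : ∀ θ, V θ = softBellman T γ β r θ (V θ)) :
    ConvexOn ℝ (Set.univ : Set (Fin (L + K) → ℝ))
      (fun θ => ∑ s, μ0 s * V θ s - ∑ l : Fin L, θ (Fin.castAdd K l) * C l) := by
  -- p is positive
  have hp : 0 < p := by
    by_contra h
    push_neg at h
    interval_cases p
    simp at hμ1
  haveI : Nonempty (Fin p) := ⟨⟨0, hp⟩⟩
  -- key: pointwise convexity of V
  have key : ∀ (θ₁ θ₂ : Fin (L + K) → ℝ) (a b : ℝ), 0 ≤ a → 0 ≤ b → a + b = 1 →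
      ∀ s, V (a • θ₁ + b • θ₂) s ≤ a * V θ₁ s + b * V θ₂ s := by
    intro θ₁ θ₂ a b ha hb hab
    set f := V (a • θ₁ + b • θ₂) with hf
    set g : Fin p → ℝ := fun s => a * V θ₁ s + b * V θ₂ s with hg
    obtain ⟨s0, _, hs0⟩ := Finset.exists_max_image Finset.univ (fun s => f s - g s)
      Finset.univ_nonempty
    set d : ℝ := f s0 - g s0 with hd
    have hle : ∀ s, f s ≤ g s + d := fun s => by
      have := hs0 s (Finset.mem_univ s); linarith
    have hgd : g = a • V θ₁ + b • V θ₂ := by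
      funext s; simp [hg]
    have step : f s0 ≤ g s0 + γ * d := by
      calc f s0 = softBellman T γ β r (a • θ₁ + b • θ₂) f s0 := by
            conv_lhs => rw [hf, hV]
        _ ≤ softBellman T γ β r (a • θ₁ + b • θ₂) g s0 + γ * d :=
            softBellman_shift T hT0 hT1 hγ0 hβ r _ f g d hle s0
        _ ≤ a * softBellman T γ β r θ₁ (V θ₁) s0 + b * softBellman T γ β r θ₂ (V θ₂) s0
              + γ * d := by
            rw [hgd]
            have := softBellman_jointly_convex T γ hβ r θ₁ θ₂ (V θ₁) (V θ₂) ha hb hab s0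
            linarith
        _ = g s0 + γ * d := by rw [hg, ← hV θ₁, ← hV θ₂]
    have hd0 : d ≤ 0 := by nlinarith [step]
    intro s
    have := hle s
    simp only [hg] at this ⊢
    linarith
  refine ⟨convex_univ, ?_⟩
  intro θ₁ _ θ₂ _ a b ha hb hab
  simp only [smul_eq_mul]
  have h1 : ∑ s, μ0 s * V (a • θ₁ + b • θ₂) s
      ≤ a * ∑ s, μ0 s * V θ₁ s + b * ∑ s, μ0 s * V θ₂ s := by
    calc ∑ s, μ0 s * V (a • θ₁ + b • θ₂) s
        ≤ ∑ s, μ0 s * (a * V θ₁ s + b * V θ₂ s) :=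
          Finset.sum_le_sum fun s _ =>
            mul_le_mul_of_nonneg_left (key θ₁ θ₂ a b ha hb hab s) (hμ0 s)
      _ = a * ∑ s, μ0 s * V θ₁ s + b * ∑ s, μ0 s * V θ₂ s := by
          rw [Finset.mul_sum, Finset.mul_sum, ← Finset.sum_add_distrib]
          exact Finset.sum_congr rfl fun s _ => by ring
  have h2 : ∑ l : Fin L, (a • θ₁ + b • θ₂) (Fin.castAdd K l) * C l
      = a * ∑ l : Fin L, θ₁ (Fin.castAdd K l) * C l
        + b * ∑ l : Fin L, θ₂ (Fin.castAdd K l) * C l := by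
    rw [Finset.mul_sum, Finset.mul_sum, ← Finset.sum_add_distrib]
    exact Finset.sum_congr rfl fun l _ => by
      simp [Pi.add_apply, Pi.smul_apply, smul_eq_mul]; ring
  simp only [Pi.add_apply, Pi.smul_apply, smul_eq_mul] at h1 h2 ⊢
  rw [h2] at *
  linarith [h1]
end

section
/- Strong duality for constrained entropy-regularized max-min MORL (Proposition 3.2): in the finite soft MOMDP setup with rewards split as r^{(1)},…,r^{(K)} (objectives) and c^{(1)},…,c^{(L)} (constraints), initial distribution μ0 and thresholds C^{(1)},…,C^{(L)}, consider the primal problem: maximize over ρ : S×A → ℝ with ρ ≥ 0, satisfying the Bellman flow equations Σ_{a'} ρ(s',a') = μ0(s') + γ Σ_{(s,a)} T(s'|s,a) ρ(s,a) for all s', and the constraints Σ_{(s,a)} c^{(l)}(s,a) ρ(s,a) ≥ C^{(l)} for l = 1,…,L, the objective min_{1≤k≤K} (Σ_{(s,a)} r^{(k)}(s,a) ρ(s,a)) − β Σ_{(s,a)} ρ(s,a) log( ρ(s,a) / Σ_{a'} ρ(s,a') ) (with the convention 0·log 0 = 0). Suppose there exists a strictly feasible ρ̄ (ρ̄(s,a)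 > 0 for all (s,a) and all L constraint inequalities strict). Then the primal optimal value equals inf over u ∈ ℝ_+^L and w in the simplex Δ^K of L(u,w) = Σ_s μ0(s) v*_{(u,w)}(s) − Σ_{l=1}^L u_l C^{(l)}, where v*_{(u,w)} is the unique fixed point of the soft Bellman operator T_{(u,w)}. -/
open Finset Matrix
open Real (log exp)

lemma mul_log_div_le_sub {x y : ℝ} (hx : 0 ≤ x) (hy : 0 < y) : x * log (y / x) ≤ y - x := by
  rcases hx.eq_or_lt with rfl | hx
  · simpa using hy.le
  calc x * log (y / x) ≤ x * (y / x - 1) :=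
        mul_le_mul_of_nonneg_left (Real.log_le_sub_one_of_pos (div_pos hy hx)) hx.le
    _ = y - x := by field_simp

/-- The log-sum inequality. -/
theorem sum_mul_log_sum_div_sum_le {ι : Type*} [Fintype ι] {p q : ι → ℝ} (hp : ∀ i, 0 ≤ p i)
    (hq : ∀ i, 0 ≤ q i) (hpq : ∀ i, q i = 0 → p i = 0) :
    (∑ i, p i) * log ((∑ i, p i) / ∑ i, q i) ≤ ∑ i, p i * log (p i / q i) := by
  set P := ∑ i, p i
  set Q := ∑ i, q i
  rcases (show 0 ≤ P from sum_nonneg fun i _ => hp i).eq_or_lt with hP | hP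
  · rw [← hP, zero_mul]
    refine sum_nonneg fun i _ => ?_
    rw [(sum_eq_zero_iff_of_nonneg fun i _ => hp i).1 hP.symm i (mem_univ i), zero_mul]
  have hQ : 0 < Q := (sum_nonneg fun i _ => hq i).lt_of_ne fun hQ => hP.ne' <| sum_eq_zero
    fun i _ => hpq i ((sum_eq_zero_iff_of_nonneg fun i _ => hq i).1 hQ.symm i (mem_univ i))
  have key : ∀ i, p i * log (P / Q) - p i * log (p i / q i) ≤ P / Q * q i - p i := by
    intro i
    rcases (hp i).eq_or_lt with hpi | hpi
    · rw [← hpi]; simpa using mul_nonneg (div_nonneg hP.le hQ.le) (hq i)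
    have hqi : 0 < q i := (hq i).lt_of_ne fun h => hpi.ne' (hpq i h.symm)
    rw [← mul_sub, ← Real.log_div (by positivity) (by positivity), div_div_eq_mul_div]
    exact mul_log_div_le_sub hpi.le (by positivity)
  have hsum := sum_le_sum fun i (_ : i ∈ univ) => key i
  rw [sum_sub_distrib, sum_sub_distrib, ← sum_mul, ← mul_sum, div_mul_cancel₀ _ hQ.ne'] at hsum
  linarith

/-- Joint convexity of `(x, y) ↦ x log (x / y)`. -/
lemma add_mul_log_div_add_le {x₁ x₂ y₁ y₂ a b : ℝ} (hx₁ : 0 ≤ x₁) (hx₂ : 0 ≤ x₂)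
    (hxy₁ : x₁ ≤ y₁) (hxy₂ : x₂ ≤ y₂) (ha : 0 ≤ a) (hb : 0 ≤ b) :
    (a * x₁ + b * x₂) * log ((a * x₁ + b * x₂) / (a * y₁ + b * y₂)) ≤
      a * (x₁ * log (x₁ / y₁)) + b * (x₂ * log (x₂ / y₂)) := by
  have scale : ∀ {c x y : ℝ}, 0 ≤ c → c * x * log (c * x / (c * y)) = c * (x * log (x / y)) := by
    intro c x y hc
    rcases hc.eq_or_lt with rfl | hc
    · simp
    · rw [mul_div_mul_left _ _ hc.ne', mul_assoc]
  have hls := sum_mul_log_sum_div_sum_le (p := ![a * x₁, b * x₂]) (q := ![a * y₁, b * y₂])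
    (fun i => by fin_cases i <;> simp <;> positivity)
    (fun i => by fin_cases i <;> simp <;> nlinarith)
    (fun i => by
      fin_cases i <;> simp only [Fin.zero_eta, Fin.mk_one, Matrix.cons_val_zero,
        Matrix.cons_val_one] <;> intro h
      · rcases mul_eq_zero.1 h with h | h
        · simp [h]
        · simp [le_antisymm (h ▸ hxy₁) hx₁]
      · rcases mul_eq_zero.1 h with h | h
        · simp [h]
        · simp [le_antisymm (h ▸ hxy₂) hx₂])
  simpa only [Fin.sum_univ_two, Matrix.cons_val_zero, Matrix.cons_val_one, scale ha, scale hb]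
    using hls

section OccupancyMeasures

variable {S A : Type*} [Fintype S] [Fintype A]

/-- `Real.log 0 = 0` makes the terms with `ρ s a = 0` vanish, as in the convention `0 log 0 = 0`. -/
noncomputable def condNegEntropy (ρ : S → A → ℝ) : ℝ :=
  ∑ s, ∑ a, ρ s a * log (ρ s a / ∑ a', ρ s a')

theorem convexOn_condNegEntropy : ConvexOn ℝ (Set.Ici 0) (condNegEntropy (S := S) (A := A)) := by
  refine ⟨convex_Ici 0, fun ρ₁ h₁ ρ₂ h₂ a b ha hb _ => ?_⟩
  simp only [condNegEntropy, smul_eq_mul, mul_sum, ← sum_add_distrib]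
  refine sum_le_sum fun s _ => sum_le_sum fun c _ => ?_
  have hrow : ∑ a', (a • ρ₁ + b • ρ₂) s a' = a * ∑ a', ρ₁ s a' + b * ∑ a', ρ₂ s a' := by
    simp [sum_add_distrib, mul_sum]
  rw [hrow]
  exact add_mul_log_div_add_le (h₁ s c) (h₂ s c)
    (single_le_sum (fun a' _ => h₁ s a') (mem_univ c))
    (single_le_sum (fun a' _ => h₂ s a') (mem_univ c)) ha hb

/-- Gibbs' variational inequality, for an unnormalized distribution `π`. -/
theorem sum_mul_sub_log_div_le_mul_log_sum_exp [Nonempty A] {β : ℝ} (hβ : 0 < β)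
    {π : A → ℝ} (hπ : ∀ a, 0 ≤ π a) (Q : A → ℝ) :
    ∑ a, π a * (Q a - β * log (π a / ∑ a', π a')) ≤
      (∑ a, π a) * (β * log (∑ a, exp (Q a / β))) := by
  set S := ∑ a, π a
  set Z := ∑ a, exp (Q a / β)
  have hZ : 0 < Z := sum_pos (fun a _ => Real.exp_pos _) univ_nonempty
  rcases (show 0 ≤ S from sum_nonneg fun a _ => hπ a).eq_or_lt with hS | hS
  · simp [← hS, (sum_eq_zero_iff_of_nonneg fun a _ => hπ a).1 hS.symm]
  have hls := sum_mul_log_sum_div_sum_le hπ (fun a => (Real.exp_pos (Q a / β)).le)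
    (fun a h => absurd h (Real.exp_ne_zero _))
  have split : ∀ a, π a * log (π a / exp (Q a / β)) =
      π a * log (π a / S) + π a * log S - π a * Q a / β := by
    intro a
    rcases (hπ a).eq_or_lt with h | h
    · simp [← h]
    · rw [Real.log_div h.ne' (Real.exp_ne_zero _), Real.log_div h.ne' hS.ne', Real.log_exp]
      ring
  rw [sum_congr rfl fun a _ => split a, Real.log_div hS.ne' hZ.ne', sum_sub_distrib,
    sum_add_distrib, ← sum_mul, ← sum_div] at hls
  have expand : ∑ a, π a * (Q a - β * log (π a / S)) =
      ∑ a, π a * Q a - β * ∑ a, π a * log (π a / S) := by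
    rw [mul_sum, ← sum_sub_distrib]
    exact sum_congr rfl fun a _ => by ring
  have hscaled := mul_le_mul_of_nonneg_left hls hβ.le
  simp only [mul_sub, mul_add, mul_div_cancel₀ _ hβ.ne'] at hscaled
  rw [expand]
  linarith

theorem sum_mul_sub_log_div_eq_of_softmax [Nonempty A] {β : ℝ} (hβ : 0 < β) (Q : A → ℝ)
    {d : ℝ} (hd : 0 ≤ d) {π : A → ℝ}
    (hπ : π = fun a => d * (exp (Q a / β) / ∑ a', exp (Q a' / β))) :
    ∑ a, π a * (Q a - β * log (π a / ∑ a', π a')) =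
      (∑ a, π a) * (β * log (∑ a, exp (Q a / β))) := by
  have hZ : 0 < ∑ a, exp (Q a / β) := sum_pos (fun a _ => Real.exp_pos _) univ_nonempty
  have hrow : ∑ a', π a' = d := by
    simp only [hπ, ← mul_sum, ← sum_div, div_self hZ.ne', mul_one]
  rcases hd.eq_or_lt with rfl | hd
  · simp [hπ]
  have hterm : ∀ a, Q a - β * log (π a / ∑ a', π a') = β * log (∑ a, exp (Q a / β)) := by
    intro a
    rw [hrow, hπ, mul_div_cancel_left₀ _ hd.ne', Real.log_div (Real.exp_ne_zero _) hZ.ne',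
      Real.log_exp]
    field_simp
    ring
  rw [sum_congr rfl fun a _ => by rw [hterm a], ← sum_mul]

def occupancySet (T : S → A → S → ℝ) (γ : ℝ) (μ₀ : S → ℝ) : Set (S → A → ℝ) :=
  {ρ | (∀ s a, 0 ≤ ρ s a) ∧ ∀ s', ∑ a', ρ s' a' = μ₀ s' + γ * ∑ s, ∑ a, T s a s' * ρ s a}

theorem convex_occupancySet (T : S → A → S → ℝ) (γ : ℝ) (μ₀ : S → ℝ) :
    Convex ℝ (occupancySet T γ μ₀) := by
  rintro ρ₁ ⟨h₁, f₁⟩ ρ₂ ⟨h₂, f₂⟩ a b ha hb hab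
  refine ⟨fun s c => add_nonneg (mul_nonneg ha (h₁ s c)) (mul_nonneg hb (h₂ s c)), fun s' => ?_⟩
  simp only [Pi.add_apply, Pi.smul_apply, smul_eq_mul, sum_add_distrib, ← mul_sum, mul_add,
    mul_left_comm (T _ _ _), f₁, f₂]
  linear_combination μ₀ s' * hab

theorem occupancySet_subset_Ici (T : S → A → S → ℝ) (γ : ℝ) (μ₀ : S → ℝ) :
    occupancySet T γ μ₀ ⊆ Set.Ici 0 :=
  fun _ hρ s a => hρ.1 s a

theorem sum_mul_eq_of_mem_occupancySet {T : S → A → S → ℝ} {γ : ℝ} {μ₀ : S → ℝ}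
    {ρ : S → A → ℝ} (hρ : ρ ∈ occupancySet T γ μ₀) (v : S → ℝ) :
    ∑ s, μ₀ s * v s =
      ∑ s, (∑ a, ρ s a) * v s - γ * ∑ s, ∑ a, ρ s a * ∑ s', T s a s' * v s' := by
  have swap : ∑ s, ∑ a, ρ s a * ∑ s', T s a s' * v s' =
      ∑ s', (∑ s, ∑ a, T s a s' * ρ s a) * v s' := by
    simp only [mul_sum, sum_mul]
    refine (sum_congr rfl fun s _ => sum_comm).trans (sum_comm.trans ?_)
    exact sum_congr rfl fun _ _ => sum_congr rfl fun _ _ => sum_congr rfl fun _ _ => by ring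
  have hμ : ∀ s, μ₀ s = ∑ a, ρ s a - γ * ∑ s₀, ∑ a, T s₀ a s * ρ s₀ a := fun s => by
    linarith [hρ.2 s]
  rw [swap, mul_sum, ← sum_sub_distrib]
  exact sum_congr rfl fun s _ => by rw [hμ s]; ring

/-- The solution is the discounted state-visitation vector `∑ₘ γ^m μ₀ Pᵐ`. -/
theorem exists_nonneg_eq_add_smul_vecMul [DecidableEq S] {P : Matrix S S ℝ}
    (hP : P ∈ rowStochastic ℝ S) {μ₀ : S → ℝ} (hμ₀ : ∀ s, 0 ≤ μ₀ s)
    (hμ₁ : ∑ s, μ₀ s = 1) {γ : ℝ} (hγ₀ : 0 ≤ γ) (hγ₁ : γ < 1) :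
    ∃ d : S → ℝ, (∀ s, 0 ≤ d s) ∧ d = μ₀ + γ • (d ᵥ* P) := by
  set x : ℕ → S → ℝ := fun m => μ₀ ᵥ* P ^ m
  have hx₀ : ∀ m s, 0 ≤ x m s := fun m => nonneg_vecMul_of_mem_rowStochastic (pow_mem hP m) hμ₀
  have hx₁ : ∀ m, ∑ s, x m s = 1 := fun m => by
    simpa [dotProduct] using vecMul_dotProduct_one_eq_one_rowStochastic (pow_mem hP m)
      (x := μ₀) (by simpa [dotProduct] using hμ₁)
  have hnorm : ∀ m, ‖γ ^ m • x m‖ ≤ γ ^ m := fun m => by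
    rw [norm_smul, norm_pow, Real.norm_of_nonneg hγ₀]
    refine mul_le_of_le_one_right (pow_nonneg hγ₀ m) ((pi_norm_le_iff_of_nonneg zero_le_one).2
      fun s => ?_)
    rw [Real.norm_of_nonneg (hx₀ m s), ← hx₁ m]
    exact single_le_sum (fun s _ => hx₀ m s) (mem_univ s)
  have hsum : Summable fun m => γ ^ m • x m :=
    Summable.of_norm_bounded (summable_geometric_of_lt_one hγ₀ hγ₁) hnorm
  let φ : (S → ℝ) →L[ℝ] S → ℝ := (γ • vecMulLinear P).toContinuousLinearMap
  have hφ : ∀ m, γ ^ (m + 1) • x (m + 1) = φ (γ ^ m • x m) := fun m => by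
    simp [φ, x, pow_succ, vecMul_vecMul, smul_smul, mul_comm]
  refine ⟨∑' m, γ ^ m • x m, fun s => ?_, ?_⟩
  · rw [tsum_apply hsum]
    exact tsum_nonneg fun m => mul_nonneg (pow_nonneg hγ₀ m) (hx₀ m s)
  · conv_lhs => rw [hsum.tsum_eq_zero_add, tsum_congr hφ, ← φ.map_tsum hsum]
    simp [φ, x]

theorem exists_mul_mem_occupancySet {T : S → A → S → ℝ} (hT₀ : ∀ s a s', 0 ≤ T s a s')
    (hT₁ : ∀ s a, ∑ s', T s a s' = 1) {γ : ℝ} (hγ₀ : 0 ≤ γ) (hγ₁ : γ < 1) {μ₀ : S → ℝ}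
    (hμ₀ : ∀ s, 0 ≤ μ₀ s) (hμ₁ : ∑ s, μ₀ s = 1) {π : S → A → ℝ} (hπ₀ : ∀ s a, 0 ≤ π s a)
    (hπ₁ : ∀ s, ∑ a, π s a = 1) :
    ∃ d : S → ℝ, (∀ s, 0 ≤ d s) ∧ (fun s a => d s * π s a) ∈ occupancySet T γ μ₀ := by
  classical
  set P : Matrix S S ℝ := Matrix.of fun s s' => ∑ a, π s a * T s a s'
  have hP : P ∈ rowStochastic ℝ S := by
    refine mem_rowStochastic_iff_sum.2 ⟨fun s s' => sum_nonneg fun a _ =>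
      mul_nonneg (hπ₀ s a) (hT₀ s a s'), fun s => ?_⟩
    simp only [P, Matrix.of_apply]
    rw [sum_comm]
    simp [← mul_sum, hT₁, hπ₁]
  obtain ⟨d, hd₀, hd⟩ := exists_nonneg_eq_add_smul_vecMul hP hμ₀ hμ₁ hγ₀ hγ₁
  refine ⟨d, hd₀, fun s a => mul_nonneg (hd₀ s) (hπ₀ s a), fun s' => ?_⟩
  rw [← mul_sum, hπ₁, mul_one]
  conv_lhs => rw [hd]
  simp [P, vecMul, dotProduct, mul_sum, mul_comm, mul_left_comm]

noncomputable def regReturn (β : ℝ) (R ρ : S → A → ℝ) : ℝ :=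
  ∑ s, ∑ a, R s a * ρ s a - β * condNegEntropy ρ

theorem concaveOn_sum_sum_mul (R : S → A → ℝ) {X : Set (S → A → ℝ)} (hX : Convex ℝ X) :
    ConcaveOn ℝ X fun ρ => ∑ s, ∑ a, R s a * ρ s a :=
  LinearMap.concaveOn
    { toFun := fun ρ => ∑ s, ∑ a, R s a * ρ s a
      map_add' := fun _ _ => by simp only [Pi.add_apply, mul_add, sum_add_distrib]
      map_smul' := fun _ _ => by
        simp only [Pi.smul_apply, smul_eq_mul, mul_sum, mul_left_comm, RingHom.id_apply] } hX

theorem concaveOn_regReturn {β : ℝ} (hβ : 0 ≤ β) (R : S → A → ℝ) :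
    ConcaveOn ℝ (Set.Ici 0) (regReturn β R) :=
  (concaveOn_sum_sum_mul R (convex_Ici 0)).sub (convexOn_condNegEntropy.smul hβ)

def softQ (T : S → A → S → ℝ) (γ : ℝ) (R : S → A → ℝ) (v : S → ℝ) (s : S) (a : A) : ℝ :=
  R s a + γ * ∑ s', T s a s' * v s'

theorem regReturn_eq_add_sum {T : S → A → S → ℝ} {γ : ℝ} {μ₀ : S → ℝ} {ρ : S → A → ℝ}
    (hρ : ρ ∈ occupancySet T γ μ₀) (β : ℝ) (R : S → A → ℝ) (v : S → ℝ) :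
    regReturn β R ρ = ∑ s, μ₀ s * v s + ∑ s,
      (∑ a, ρ s a * (softQ T γ R v s a - β * log (ρ s a / ∑ a', ρ s a')) -
        (∑ a, ρ s a) * v s) := by
  rw [sum_mul_eq_of_mem_occupancySet hρ v]
  simp only [regReturn, condNegEntropy, softQ, mul_sub, mul_add, sum_sub_distrib,
    sum_add_distrib, mul_sum, mul_comm (ρ _ _) (R _ _)]
  ring_nf

end OccupancyMeasures

section SoftBellman

variable {p n : ℕ} {A : Type*} [Fintype A] [Nonempty A] {T : Fin p → A → Fin p → ℝ} {γ β : ℝ}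
  {r : Fin p → A → Fin n → ℝ} {θ : Fin n → ℝ} {v : Fin p → ℝ}

theorem regReturn_le_of_eq_softBellman (hβ : 0 < β) (hv : v = softBellman T γ β r θ v)
    {μ₀ : Fin p → ℝ} {ρ : Fin p → A → ℝ} (hρ : ρ ∈ occupancySet T γ μ₀) :
    regReturn β (fun s a => ∑ i, θ i * r s a i) ρ ≤ ∑ s, μ₀ s * v s := by
  rw [regReturn_eq_add_sum hρ β _ v]
  refine add_le_of_nonpos_right (sum_nonpos fun s _ => sub_nonpos.2 ?_)
  refine (sum_mul_sub_log_div_le_mul_log_sum_exp hβ (hρ.1 s) _).trans_eq ?_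
  rw [congrFun hv s]
  rfl

theorem exists_regReturn_eq_of_eq_softBellman (hT₀ : ∀ s a s', 0 ≤ T s a s')
    (hT₁ : ∀ s a, ∑ s', T s a s' = 1) (hγ₀ : 0 ≤ γ) (hγ₁ : γ < 1) (hβ : 0 < β)
    (hv : v = softBellman T γ β r θ v) {μ₀ : Fin p → ℝ} (hμ₀ : ∀ s, 0 ≤ μ₀ s)
    (hμ₁ : ∑ s, μ₀ s = 1) :
    ∃ ρ ∈ occupancySet T γ μ₀,
      regReturn β (fun s a => ∑ i, θ i * r s a i) ρ = ∑ s, μ₀ s * v s := by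
  set Q := softQ T γ (fun s a => ∑ i, θ i * r s a i) v
  have hZ : ∀ s, 0 < ∑ a, exp (Q s a / β) := fun s =>
    sum_pos (fun a _ => Real.exp_pos _) univ_nonempty
  obtain ⟨d, hd₀, hρ⟩ := exists_mul_mem_occupancySet hT₀ hT₁ hγ₀ hγ₁ hμ₀ hμ₁
    (π := fun s a => exp (Q s a / β) / ∑ a', exp (Q s a' / β))
    (fun s a => (div_pos (Real.exp_pos _) (hZ s)).le)
    (fun s => by rw [← sum_div, div_self (hZ s).ne'])
  refine ⟨_, hρ, ?_⟩
  rw [regReturn_eq_add_sum hρ β _ v]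
  refine add_eq_left.2 (sum_eq_zero fun s _ => sub_eq_zero.2 ?_)
  rw [sum_mul_sub_log_div_eq_of_softmax hβ (Q s) (hd₀ s) rfl, congrFun hv s]
  rfl

end SoftBellman

section LagrangeMultipliers

lemma nonneg_of_forall_pos_sub_mul_lt {a b c : ℝ} (h : ∀ t > 0, a - t * b < c) : 0 ≤ b := by
  by_contra! hb
  have hlt := h ((|c - a| + 1) / -b) (div_pos (by positivity) (neg_pos.2 hb))
  rw [div_mul_eq_mul_div, div_neg, mul_div_cancel_right₀ _ hb.ne] at hlt
  linarith [le_abs_self (c - a)]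

lemma le_of_forall_pos_sub_mul_lt {a b c : ℝ} (h : ∀ t > 0, a - t * b < c) : a ≤ c := by
  refine le_of_forall_pos_lt_add fun ε hε => ?_
  rcases le_or_gt b 0 with hb | hb
  · nlinarith [h 1 one_pos]
  · have := h (ε / b) (by positivity)
    rwa [div_mul_cancel₀ _ hb.ne', sub_lt_iff_lt_add] at this

/-- The Fan–Glicksberg–Hoffman alternative: separate `0` from the open convex set
`{z | ∃ x ∈ X, ∀ j, z j < Φ j x}`. -/
theorem exists_nonneg_ne_zero_sum_mul_nonpos {E ι : Type*} [AddCommGroup E] [Module ℝ E]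
    [Fintype ι] {X : Set E} (hXc : Convex ℝ X) (hX : X.Nonempty) {Φ : ι → E → ℝ}
    (hΦ : ∀ j, ConcaveOn ℝ X (Φ j)) (h : ∀ x ∈ X, ∃ j, Φ j x ≤ 0) :
    ∃ c : ι → ℝ, (∀ j, 0 ≤ c j) ∧ c ≠ 0 ∧ ∀ x ∈ X, ∑ j, c j * Φ j x ≤ 0 := by
  classical
  set U : Set (ι → ℝ) := {z | ∃ x ∈ X, ∀ j, z j < Φ j x}
  have hU_conv : Convex ℝ U := by
    rintro z₁ ⟨x₁, hx₁, hz₁⟩ z₂ ⟨x₂, hx₂, hz₂⟩ a b ha hb hab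
    refine ⟨a • x₁ + b • x₂, hXc hx₁ hx₂ ha hb hab, fun j => ?_⟩
    have hlt := convex_Iio (0 : ℝ) (sub_neg.2 (hz₁ j)) (sub_neg.2 (hz₂ j)) ha hb hab
    have hconc := (hΦ j).2 hx₁ hx₂ ha hb hab
    simp only [Set.mem_Iio, smul_eq_mul, Pi.add_apply, Pi.smul_apply] at hlt hconc ⊢
    linarith
  have hU_open : IsOpen U := by
    have : U = ⋃ x ∈ X, ⋂ j, {z | z j < Φ j x} := by ext; simp [U]
    rw [this]
    exact isOpen_biUnion fun x _ => isOpen_iInter_of_finite fun j =>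
      isOpen_lt (continuous_apply j) continuous_const
  have h0 : (0 : ι → ℝ) ∉ U := fun ⟨x, hx, hlt⟩ => by
    obtain ⟨j, hj⟩ := h x hx
    exact (hlt j).not_ge hj
  obtain ⟨f, hf⟩ := geometric_hahn_banach_open_point hU_conv hU_open h0
  set c : ι → ℝ := fun j => f (fun i => if j = i then 1 else 0)
  have hfc : ∀ z, f z = ∑ j, z j * c j := fun z => by
    simpa using LinearMap.pi_apply_eq_sum_univ (f : (ι → ℝ) →ₗ[ℝ] ℝ) z
  have hneg : ∀ x ∈ X, ∀ z : ι → ℝ, (∀ j, 0 < z j) → ∑ j, (Φ j x - z j) * c j < 0 :=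
    fun x hx z hz => by
      simpa [hfc] using hf (fun j => Φ j x - z j) ⟨x, hx, fun j => by linarith [hz j]⟩
  obtain ⟨x₀, hx₀⟩ := hX
  refine ⟨c, fun j => ?_, fun hc => ?_, fun x hx => ?_⟩
  · refine nonneg_of_forall_pos_sub_mul_lt (a := ∑ i, (Φ i x₀ - 1) * c i) (c := 0) fun t ht => ?_
    have := hneg x₀ hx₀ (fun i => 1 + if j = i then t else 0) fun i => by positivity
    simpa [sub_add_eq_sub_sub, sub_mul, sum_sub_distrib, ite_mul] using this
  · simpa [hc] using hneg x₀ hx₀ 1 fun _ => one_pos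
  · refine le_of_forall_pos_sub_mul_lt (b := ∑ j, c j) fun t ht => ?_
    simpa [sub_mul, mul_sum, mul_comm] using hneg x hx (fun _ => t) fun _ => ht

theorem exists_multipliers_of_slater {E ι κ : Type*} [AddCommGroup E] [Module ℝ E] [Fintype ι]
    [Fintype κ] {X : Set E} (hXc : Convex ℝ X) {g : ι → E → ℝ} (hg : ∀ i, ConcaveOn ℝ X (g i))
    {F : κ → E → ℝ} (hF : ∀ k, ConcaveOn ℝ X (F k)) {x₀ : E} (hx₀ : x₀ ∈ X)
    (hslater : ∀ i, 0 < g i x₀) {c : ℝ} (hc : ∀ x ∈ X, (∀ i, 0 < g i x) → ∃ k, F k x ≤ c) :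
    ∃ u : ι → ℝ, ∃ w : κ → ℝ, (∀ i, 0 ≤ u i) ∧ (∀ k, 0 ≤ w k) ∧ ∑ k, w k = 1 ∧
      ∀ x ∈ X, ∑ i, u i * g i x + ∑ k, w k * F k x ≤ c := by
  obtain ⟨m, hm₀, hm, hmX⟩ := exists_nonneg_ne_zero_sum_mul_nonpos hXc ⟨x₀, hx₀⟩
    (Φ := Sum.elim g fun k x => F k x - c)
    (Sum.forall.2 ⟨hg, fun k => (hF k).sub (convexOn_const c hXc)⟩) fun x hx => by
      by_cases hpos : ∀ i, 0 < g i x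
      · obtain ⟨k, hk⟩ := hc x hx hpos
        exact ⟨.inr k, sub_nonpos.2 hk⟩
      · obtain ⟨i, hi⟩ := not_forall.1 hpos
        exact ⟨.inl i, not_lt.1 hi⟩
  simp only [Fintype.sum_sum_type, Sum.elim_inl, Sum.elim_inr] at hmX
  set W := ∑ k, m (.inr k)
  -- Slater's point forces a nonzero weight on the objectives.
  have hW : 0 < W := by
    refine (sum_nonneg fun k _ => hm₀ (.inr k)).lt_of_ne fun hW => hm ?_
    have hr : ∀ k, m (.inr k) = 0 := fun k =>
      (sum_eq_zero_iff_of_nonneg fun k _ => hm₀ (.inr k)).1 hW.symm k (mem_univ k)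
    have hl : ∀ i, m (.inl i) * g i x₀ = 0 := by
      refine fun i => (sum_eq_zero_iff_of_nonneg fun i _ =>
        mul_nonneg (hm₀ (.inl i)) (hslater i).le).1 (le_antisymm ?_ ?_) i (mem_univ i)
      · simpa [hr] using hmX x₀ hx₀
      · exact sum_nonneg fun i _ => mul_nonneg (hm₀ (.inl i)) (hslater i).le
    ext (i | k)
    · simpa [(hslater i).ne'] using hl i
    · exact hr k
  refine ⟨fun i => m (.inl i) / W, fun k => m (.inr k) / W, fun i => div_nonneg (hm₀ _) hW.le,
    fun k => div_nonneg (hm₀ _) hW.le, by rw [← sum_div, div_self hW.ne'], fun x hx => ?_⟩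
  have := hmX x hx
  simp only [mul_sub, sum_sub_distrib, ← sum_mul] at this
  simp only [div_mul_eq_mul_div, ← sum_div, ← add_div, div_le_iff₀ hW]
  linarith

end LagrangeMultipliers

theorem csSup_eq_csInf_of_forall_le {P D : Set ℝ} (hP : P.Nonempty) (hD : D.Nonempty)
    (hweak : ∀ x ∈ P, ∀ y ∈ D, x ≤ y) (hstrong : ∀ c ∈ upperBounds P, ∃ y ∈ D, y ≤ c) :
    sSup P = sInf D := by
  obtain ⟨y, hy, hle⟩ := hstrong (sSup P) fun x hx =>
    le_csSup ⟨hD.some, fun x hx => hweak x hx _ hD.some_mem⟩ hx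
  exact le_antisymm (csSup_le hP fun x hx => le_csInf hD (hweak x hx))
    ((csInf_le ⟨hP.some, hweak _ hP.some_mem⟩ hy).trans hle)

section MaxMin

variable {p L K : ℕ} {A : Type*} [Fintype A] {T : Fin p → A → Fin p → ℝ} {γ β : ℝ}
  {r : Fin p → A → Fin (L + K) → ℝ} {μ₀ : Fin p → ℝ} {C : Fin L → ℝ}

theorem sum_sum_append_mul (u : Fin L → ℝ) (w : Fin K → ℝ) (ρ : Fin p → A → ℝ) :
    ∑ s, ∑ a, (∑ i, Fin.append u w i * r s a i) * ρ s a =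
      ∑ l, u l * ∑ s, ∑ a, r s a (Fin.castAdd K l) * ρ s a +
        ∑ k, w k * ∑ s, ∑ a, r s a (Fin.natAdd L k) * ρ s a := by
  have swap : ∑ s, ∑ a, (∑ i, Fin.append u w i * r s a i) * ρ s a =
      ∑ i, Fin.append u w i * ∑ s, ∑ a, r s a i * ρ s a := by
    simp only [sum_mul, mul_sum]
    refine (sum_congr rfl fun s _ => sum_comm).trans (sum_comm.trans ?_)
    exact sum_congr rfl fun _ _ => sum_congr rfl fun _ _ => sum_congr rfl fun _ _ => by ring
  rw [swap, Fin.sum_univ_add]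
  simp only [Fin.append_left, Fin.append_right]

theorem lagrangian_eq_regReturn_sub (u : Fin L → ℝ) {w : Fin K → ℝ} (hw : ∑ k, w k = 1)
    (ρ : Fin p → A → ℝ) :
    ∑ l, u l * (∑ s, ∑ a, r s a (Fin.castAdd K l) * ρ s a - C l) +
        ∑ k, w k * regReturn β (fun s a => r s a (Fin.natAdd L k)) ρ =
      regReturn β (fun s a => ∑ i, Fin.append u w i * r s a i) ρ - ∑ l, u l * C l := by
  simp only [regReturn, sum_sum_append_mul, mul_sub, sum_sub_distrib, ← sum_mul, hw]
  ring

variable [Nonempty A]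

theorem inf'_sub_le_sum_mul_sub (hβ : 0 < β) (hne : (univ : Finset (Fin K)).Nonempty)
    {ρ : Fin p → A → ℝ} (hρ : ρ ∈ occupancySet T γ μ₀)
    (hcon : ∀ l, C l ≤ ∑ s, ∑ a, r s a (Fin.castAdd K l) * ρ s a) {u : Fin L → ℝ}
    {w : Fin K → ℝ} (hu : ∀ l, 0 ≤ u l) (hw₀ : ∀ k, 0 ≤ w k) (hw₁ : ∑ k, w k = 1)
    {v : Fin p → ℝ} (hv : v = softBellman T γ β r (Fin.append u w) v) :
    univ.inf' hne (fun k => ∑ s, ∑ a, r s a (Fin.natAdd L k) * ρ s a) - β * condNegEntropy ρ ≤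
      ∑ s, μ₀ s * v s - ∑ l, u l * C l := by
  calc univ.inf' hne (fun k => ∑ s, ∑ a, r s a (Fin.natAdd L k) * ρ s a) - β * condNegEntropy ρ
      = ∑ k, w k * (univ.inf' hne (fun k => ∑ s, ∑ a, r s a (Fin.natAdd L k) * ρ s a) -
          β * condNegEntropy ρ) := by rw [← sum_mul, hw₁, one_mul]
    _ ≤ ∑ k, w k * regReturn β (fun s a => r s a (Fin.natAdd L k)) ρ := by
      refine sum_le_sum fun k _ => mul_le_mul_of_nonneg_left (sub_le_sub_right ?_ _) (hw₀ k)
      exact inf'_le (fun k => ∑ s, ∑ a, r s a (Fin.natAdd L k) * ρ s a) (mem_univ k)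
    _ ≤ ∑ l, u l * (∑ s, ∑ a, r s a (Fin.castAdd K l) * ρ s a - C l) +
          ∑ k, w k * regReturn β (fun s a => r s a (Fin.natAdd L k)) ρ :=
      le_add_of_nonneg_left (sum_nonneg fun l _ => mul_nonneg (hu l) (sub_nonneg.2 (hcon l)))
    _ = regReturn β (fun s a => ∑ i, Fin.append u w i * r s a i) ρ - ∑ l, u l * C l :=
      lagrangian_eq_regReturn_sub u hw₁ ρ
    _ ≤ ∑ s, μ₀ s * v s - ∑ l, u l * C l :=
      sub_le_sub_right (regReturn_le_of_eq_softBellman hβ hv hρ) _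

theorem sum_mul_sub_le_of_lagrangian_le (hT₀ : ∀ s a s', 0 ≤ T s a s')
    (hT₁ : ∀ s a, ∑ s', T s a s' = 1) (hγ₀ : 0 ≤ γ) (hγ₁ : γ < 1) (hβ : 0 < β)
    (hμ₀ : ∀ s, 0 ≤ μ₀ s) (hμ₁ : ∑ s, μ₀ s = 1) {u : Fin L → ℝ} {w : Fin K → ℝ}
    (hw₁ : ∑ k, w k = 1) {v : Fin p → ℝ} (hv : v = softBellman T γ β r (Fin.append u w) v)
    {c : ℝ} (hlag : ∀ ρ ∈ occupancySet T γ μ₀,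
      ∑ l, u l * (∑ s, ∑ a, r s a (Fin.castAdd K l) * ρ s a - C l) +
        ∑ k, w k * regReturn β (fun s a => r s a (Fin.natAdd L k)) ρ ≤ c) :
    ∑ s, μ₀ s * v s - ∑ l, u l * C l ≤ c := by
  obtain ⟨ρ, hρ, heq⟩ := exists_regReturn_eq_of_eq_softBellman hT₀ hT₁ hγ₀ hγ₁ hβ hv hμ₀ hμ₁
  simpa only [lagrangian_eq_regReturn_sub u hw₁ ρ, heq] using hlag ρ hρ

end MaxMin

/-- Strong duality for constrained entropy-regularized max-min MORL (Proposition 3.2).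
The reward vector `r : S × A → ℝ^{L+K}` has constraint rewards `c^{(l)} = r (castAdd K l)`
in its first `L` components and objective rewards `r^{(k)} = r (natAdd L k)` in its last
`K` components.  Under strict feasibility of some occupancy measure `ρbar`, the optimal
value of the primal problem (maximizing the entropy-regularized minimum objective return
over nonnegative `ρ` satisfying the Bellman flow equations and the `L` constraints)
equals the infimum over `u ∈ ℝ₊^L` and `w ∈ Δ^K` of
`L(u,w) = Σ_s μ0(s) v*_{(u,w)}(s) − Σ_l u_l C_l`, where `v*_{(u,w)} = V (Fin.append u w)`
is the unique fixed point of the soft Bellman operator. -/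
theorem stmt_4 {p L K : ℕ} (hK : 1 ≤ K) {A : Type*} [Fintype A] [Nonempty A]
    (T : Fin p → A → Fin p → ℝ)
    (hT0 : ∀ s a s', 0 ≤ T s a s') (hT1 : ∀ s a, ∑ s', T s a s' = 1)
    (γ : ℝ) (hγ0 : 0 ≤ γ) (hγ1 : γ < 1)
    (β : ℝ) (hβ : 0 < β)
    (r : Fin p → A → Fin (L + K) → ℝ)
    (μ0 : Fin p → ℝ) (hμ0 : ∀ s, 0 ≤ μ0 s) (hμ1 : ∑ s, μ0 s = 1)
    (C : Fin L → ℝ)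
    (V : (Fin (L + K) → ℝ) → Fin p → ℝ)
    (hV : ∀ θ, V θ = softBellman T γ β r θ (V θ))
    -- strict feasibility (Slater condition)
    (ρbar : Fin p → A → ℝ)
    (hρbar_pos : ∀ s a, 0 < ρbar s a)
    (hρbar_flow : ∀ s', ∑ a', ρbar s' a' = μ0 s' + γ * ∑ s, ∑ a, T s a s' * ρbar s a)
    (hρbar_con : ∀ l : Fin L, C l < ∑ s, ∑ a, r s a (Fin.castAdd K l) * ρbar s a) :
    sSup {val : ℝ | ∃ ρ : Fin p → A → ℝ,
        (∀ s a, 0 ≤ ρ s a) ∧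
        (∀ s', ∑ a', ρ s' a' = μ0 s' + γ * ∑ s, ∑ a, T s a s' * ρ s a) ∧
        (∀ l : Fin L, C l ≤ ∑ s, ∑ a, r s a (Fin.castAdd K l) * ρ s a) ∧
        val = (Finset.univ.inf' (Finset.univ_nonempty_iff.mpr (Fin.pos_iff_nonempty.mp hK))
                (fun k : Fin K => ∑ s, ∑ a, r s a (Fin.natAdd L k) * ρ s a))
              - β * ∑ s, ∑ a, ρ s a * Real.log (ρ s a / ∑ a', ρ s a')}
      = sInf {val : ℝ | ∃ (u : Fin L → ℝ) (w : Fin K → ℝ),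
        (∀ l, 0 ≤ u l) ∧ (∀ k, 0 ≤ w k) ∧ (∑ k, w k = 1) ∧
        val = ∑ s, μ0 s * V (Fin.append u w) s - ∑ l, u l * C l} := by
  have hρbar : ρbar ∈ occupancySet T γ μ0 := ⟨fun s a => (hρbar_pos s a).le, hρbar_flow⟩
  refine csSup_eq_csInf_of_forall_le ⟨_, ρbar, hρbar.1, hρbar.2, fun l => (hρbar_con l).le, rfl⟩
    ⟨_, 0, Pi.single ⟨0, hK⟩ 1, fun _ => le_rfl, fun k => by rw [Pi.single_apply]; positivity,
      by simp, rfl⟩ ?_ fun c hc => ?_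
  · rintro _ ⟨ρ, hρ₀, hρ, hcon, rfl⟩ _ ⟨u, w, hu, hw₀, hw₁, rfl⟩
    exact inf'_sub_le_sum_mul_sub hβ _ ⟨hρ₀, hρ⟩ hcon hu hw₀ hw₁ (hV _)
  obtain ⟨u, w, hu, hw₀, hw₁, hlag⟩ := exists_multipliers_of_slater (convex_occupancySet T γ μ0)
    (fun l => (concaveOn_sum_sum_mul _ (convex_occupancySet T γ μ0)).sub
      (convexOn_const (C l) (convex_occupancySet T γ μ0)))
    (fun k => (concaveOn_regReturn hβ.le _).subset (occupancySet_subset_Ici T γ μ0)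
      (convex_occupancySet T γ μ0))
    hρbar (fun l => sub_pos.2 (hρbar_con l)) fun ρ hρ hpos => by
      obtain ⟨k, -, hk⟩ := exists_mem_eq_inf' (Finset.univ_nonempty_iff.mpr
        (Fin.pos_iff_nonempty.mp hK)) fun k : Fin K => ∑ s, ∑ a, r s a (Fin.natAdd L k) * ρ s a
      exact ⟨k, hc ⟨ρ, hρ.1, hρ.2, fun l => (sub_pos.1 (hpos l)).le, by rw [hk]; rfl⟩⟩
  exact ⟨_, ⟨u, w, hu, hw₀, hw₁, rfl⟩,
    sum_mul_sub_le_of_lagrangian_le hT0 hT1 hγ0 hγ1 hβ hμ0 hμ1 hw₁ (hV _) hlag⟩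
end

section
/- Linear convergence of inexact projected gradient descent for strongly convex smooth objectives (abstract form of Theorem 3.6): let C ⊆ ℝ^n be a nonempty closed convex set, f : ℝ^n → ℝ differentiable with ∇f α-Lipschitz (α > 0) and f λ-strongly convex with 0 < λ ≤ α, and let x* be the minimizer of f over C. Suppose a sequence (x^m) in C satisfies x^{m+1} = proj_C( x^m − (1/α)(∇f(x^m) + e_m) ) where the errors satisfy ‖e_m‖₂ ≤ E for all m and some E ≥ 0. Then for every m ≥ 1, ‖x^m − x*‖₂ ≤ (1 − λ/α)^m ‖x^0 − x*‖₂ + E/λ. -/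
/-! With `h = f - λ/2 ‖·‖²`, which is convex and satisfies
`⟪∇h x - ∇h y, x - y⟫ ≤ (α - λ) ‖x - y‖²`, one has `α (T x - T y) = (α - λ)(x - y) - (∇h x - ∇h y)`
for the gradient step `T x = x - (1/α) ∇f x`. Co-coercivity of `∇h`,
`‖∇h x - ∇h y‖² ≤ (α - λ) ⟪∇h x - ∇h y, x - y⟫`, then makes `T` a `(1 - λ/α)`-contraction.
By first-order optimality `x*` satisfies the variational inequality characterising
`proj_C (T x*)`, and the two variational inequalities make the projection nonexpansive, so
`‖x^{m+1} - x*‖ ≤ (1 - λ/α) ‖x^m - x*‖ + E/α`. Unrolling, with `E/α = (λ/α)(E/λ)`, gives the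
bound. -/

open Set InnerProductSpace
open scoped RealInnerProductSpace

section InnerProduct

variable {E : Type*} [NormedAddCommGroup E] [InnerProductSpace ℝ E]

theorem inner_sub_nonpos_of_forall_norm_sub_le {K : Set E} (hK : Convex ℝ K) {u v : E}
    (hv : v ∈ K) (hmin : ∀ w ∈ K, ‖v - u‖ ≤ ‖w - u‖) :
    ∀ w ∈ K, ⟪u - v, w - v⟫ ≤ 0 := by
  have : Nonempty K := ⟨⟨v, hv⟩⟩
  refine (norm_eq_iInf_iff_real_inner_le_zero hK hv).1 (le_antisymm ?_ ?_)
  · exact le_ciInf fun w => by simpa only [norm_sub_rev u] using hmin w w.2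
  · exact ciInf_le ⟨0, forall_mem_range.2 fun w : K => norm_nonneg (u - w)⟩ ⟨v, hv⟩

theorem norm_sub_le_of_inner_sub_nonpos {u u' v v' : E} (h : ⟪u - v, v' - v⟫ ≤ 0)
    (h' : ⟪u' - v', v - v'⟫ ≤ 0) : ‖v - v'‖ ≤ ‖u - u'‖ := by
  have hsq : ‖v - v'‖ ^ 2 ≤ ⟪u - u', v - v'⟫ := by
    have hsplit : u - u' = (u - v) + (v - v') - (u' - v') := by abel
    rw [← neg_sub v v', inner_neg_right] at h
    rw [hsplit, inner_sub_left, inner_add_left, real_inner_self_eq_norm_sq]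
    linarith
  nlinarith [real_inner_le_norm (u - u') (v - v'), norm_nonneg (v - v'), norm_nonneg (u - u')]

theorem norm_smul_sub_le_of_sq_le_inner {c : ℝ} (hc : 0 ≤ c) {u d : E}
    (h : ‖d‖ ^ 2 ≤ c * ⟪d, u⟫) : ‖c • u - d‖ ≤ c * ‖u‖ := by
  rw [← pow_le_pow_iff_left₀ (norm_nonneg _) (by positivity) two_ne_zero, norm_sub_sq_real,
    norm_smul, real_inner_smul_left, real_inner_comm, Real.norm_of_nonneg hc]
  nlinarith [sq_nonneg ‖d‖]

end InnerProduct

theorem le_pow_mul_add_of_le_mul_add {a : ℕ → ℝ} {ρ c : ℝ} (hρ : 0 ≤ ρ) (hc : 0 ≤ c)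
    (h : ∀ m, a (m + 1) ≤ ρ * a m + (1 - ρ) * c) (m : ℕ) : a m ≤ ρ ^ m * a 0 + c := by
  induction m with
  | zero => simpa using hc
  | succ m ih =>
    calc a (m + 1) ≤ ρ * a m + (1 - ρ) * c := h m
      _ ≤ ρ * (ρ ^ m * a 0 + c) + (1 - ρ) * c := by gcongr
      _ = ρ ^ (m + 1) * a 0 + c := by ring

section Gradient

variable {E : Type*} [NormedAddCommGroup E] [InnerProductSpace ℝ E] [CompleteSpace E]
  {F : E → ℝ} {G : E → E} {x y : E}

theorem HasGradientAt.sub {F₁ F₂ : E → ℝ} {G₁ G₂ : E} (h₁ : HasGradientAt F₁ G₁ x)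
    (h₂ : HasGradientAt F₂ G₂ x) : HasGradientAt (fun y => F₁ y - F₂ y) (G₁ - G₂) x := by
  rw [hasGradientAt_iff_hasFDerivAt, map_sub]
  exact h₁.hasFDerivAt.sub h₂.hasFDerivAt

theorem hasGradientAt_half_mul_norm_sq (c : ℝ) (x : E) :
    HasGradientAt (fun y => c / 2 * ‖y‖ ^ 2) (c • x) x := by
  rw [hasGradientAt_iff_hasFDerivAt]
  refine ((hasStrictFDerivAt_norm_sq x).hasFDerivAt.const_mul (c / 2)).congr_fderiv ?_
  ext v
  simp only [smul_apply, coe_innerSL_apply, nsmul_eq_mul, Nat.cast_ofNat,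
    smul_eq_mul, map_smul, toDual_apply_apply]
  ring

theorem HasGradientAt.hasDerivAt_comp_lineMap {G' : E} {s : ℝ}
    (hG : HasGradientAt F G' (AffineMap.lineMap x y s)) :
    HasDerivAt (F ∘ (AffineMap.lineMap x y : ℝ → E)) ⟪G', y - x⟫ s := by
  simpa [toDual_apply_apply] using
    hG.hasFDerivAt.comp_hasDerivAt s AffineMap.hasDerivAt_lineMap

theorem add_inner_le_of_convexOn_lineMap {G' : E}
    (hφ : ConvexOn ℝ univ (F ∘ (AffineMap.lineMap x y : ℝ → E)))
    (hG : HasGradientAt F G' x) : F x + ⟪G', y - x⟫ ≤ F y := by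
  have hderiv := (AffineMap.lineMap_apply_zero x y (k := ℝ) ▸ hG).hasDerivAt_comp_lineMap
  have := hφ.le_slope_of_hasDerivAt trivial trivial zero_lt_one hderiv
  simp only [slope_def_field, Function.comp_apply, AffineMap.lineMap_apply_one,
    AffineMap.lineMap_apply_zero, sub_zero, div_one] at this
  linarith

theorem ConvexOn.add_inner_gradient_le {G' : E} (hF : ConvexOn ℝ univ F)
    (hG : HasGradientAt F G' x) (y : E) :
    F x + ⟪G', y - x⟫ ≤ F y :=
  add_inner_le_of_convexOn_lineMap (hF.comp_affineMap _) hG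

theorem add_inner_gradient_le_of_monotone (hG : ∀ x, HasGradientAt F (G x) x)
    (hmono : ∀ x y, 0 ≤ ⟪G x - G y, x - y⟫) (x y : E) :
    F x + ⟪G x, y - x⟫ ≤ F y := by
  have hderiv (s : ℝ) := (hG (AffineMap.lineMap x y s)).hasDerivAt_comp_lineMap
  refine add_inner_le_of_convexOn_lineMap ?_ (hG x)
  refine MonotoneOn.convexOn_of_deriv convex_univ
    (fun s _ => (hderiv s).continuousAt.continuousWithinAt)
    (fun s _ => (hderiv s).differentiableAt.differentiableWithinAt) ?_
  intro s _ t _ hst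
  rw [(hderiv s).deriv, (hderiv t).deriv]
  have := hmono (AffineMap.lineMap x y t) (AffineMap.lineMap x y s)
  rw [AffineMap.lineMap_apply_module', AffineMap.lineMap_apply_module', add_sub_add_right_eq_sub,
    ← sub_smul, real_inner_smul_right] at this
  rcases hst.eq_or_lt with rfl | hlt
  · exact le_rfl
  · have := (mul_nonneg_iff_of_pos_left (sub_pos.2 hlt)).1 this
    rw [inner_sub_left] at this
    simp only [AffineMap.lineMap_apply_module']
    linarith

theorem le_add_inner_add_half_mul_norm_sq (hG : ∀ x, HasGradientAt F (G x) x) {L : ℝ}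
    (hL : ∀ x y, ⟪G x - G y, x - y⟫ ≤ L * ‖x - y‖ ^ 2) (x y : E) :
    F y ≤ F x + ⟪G x, y - x⟫ + L / 2 * ‖y - x‖ ^ 2 := by
  have hmono (a b : E) : 0 ≤ ⟪(L • a - G a) - (L • b - G b), a - b⟫ := by
    rw [sub_sub_sub_comm, ← smul_sub, inner_sub_left, real_inner_smul_left,
      real_inner_self_eq_norm_sq]
    linarith [hL a b]
  have := add_inner_gradient_le_of_monotone
    (fun z => (hasGradientAt_half_mul_norm_sq L z).sub (hG z)) hmono x y
  rw [inner_sub_left, real_inner_smul_left, inner_sub_right, real_inner_self_eq_norm_sq] at this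
  rw [norm_sub_sq_real, real_inner_comm x y]
  linarith

-- Bound `F (y - t • (G y - G x))` below by convexity at `x` and above by the descent lemma at `y`.
theorem ConvexOn.add_inner_gradient_add_mul_norm_sq_le (hF : ConvexOn ℝ univ F)
    (hG : ∀ x, HasGradientAt F (G x) x) {L : ℝ}
    (hL : ∀ x y, ⟪G x - G y, x - y⟫ ≤ L * ‖x - y‖ ^ 2) (x y : E) (t : ℝ) :
    F x + ⟪G x, y - x⟫ + t * (1 - L * t / 2) * ‖G y - G x‖ ^ 2 ≤ F y := by
  set d := G y - G x
  have hlow := hF.add_inner_gradient_le (hG x) (y - t • d)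
  have hup := le_add_inner_add_half_mul_norm_sq hG hL y (y - t • d)
  have hd : ⟪G y, d⟫ = ⟪G x, d⟫ + ‖d‖ ^ 2 := by
    rw [← real_inner_self_eq_norm_sq, ← inner_add_left, add_sub_cancel]
  rw [sub_right_comm, inner_sub_right, real_inner_smul_right] at hlow
  rw [sub_sub_cancel_left, inner_neg_right, real_inner_smul_right, norm_neg, norm_smul, mul_pow,
    Real.norm_eq_abs, sq_abs, hd] at hup
  linarith

theorem ConvexOn.sq_norm_gradient_sub_le_mul_inner (hF : ConvexOn ℝ univ F)
    (hG : ∀ x, HasGradientAt F (G x) x) {L : ℝ} (hL0 : 0 ≤ L)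
    (hL : ∀ x y, ⟪G x - G y, x - y⟫ ≤ L * ‖x - y‖ ^ 2) (x y : E) :
    ‖G x - G y‖ ^ 2 ≤ L * ⟪G x - G y, x - y⟫ := by
  have hsum (t : ℝ) : 2 * t * (1 - L * t / 2) * ‖G x - G y‖ ^ 2 ≤ ⟪G x - G y, x - y⟫ := by
    have h₁ := hF.add_inner_gradient_add_mul_norm_sq_le hG hL x y t
    have h₂ := hF.add_inner_gradient_add_mul_norm_sq_le hG hL y x t
    rw [norm_sub_rev (G y)] at h₁
    rw [← neg_sub x y, inner_neg_right] at h₁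
    rw [inner_sub_left]
    linarith
  rcases hL0.eq_or_lt with rfl | hLpos
  · nlinarith [hsum 1, hL x y, sq_nonneg ‖G x - G y‖]
  · have := hsum L⁻¹
    field_simp at this
    linarith

theorem IsMinOn.inner_gradient_sub_nonneg {K : Set E} (hK : Convex ℝ K) {G' : E}
    (hmin : IsMinOn F K x) (hx : x ∈ K) (hy : y ∈ K) (hF : HasGradientAt F G' x) :
    0 ≤ ⟪G', y - x⟫ := by
  simpa [toDual_apply_apply] using hmin.localize.hasFDerivWithinAt_nonneg
    hF.hasFDerivAt.hasFDerivWithinAt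
    (sub_mem_posTangentConeAt_of_segment_subset (hK.segment_subset hx hy))

theorem StrongConvexOn.norm_gradient_step_sub_le {m L : ℝ} (hF : StrongConvexOn univ m F)
    (hG : ∀ x, HasGradientAt F (G x) x) (hL : ∀ x y, ⟪G x - G y, x - y⟫ ≤ L * ‖x - y‖ ^ 2)
    (hL0 : 0 < L) (hmL : m ≤ L) (x y : E) :
    ‖(x - (1 / L) • G x) - (y - (1 / L) • G y)‖ ≤ (1 - m / L) * ‖x - y‖ := by
  have hGm (z : E) : HasGradientAt (fun x => F x - m / 2 * ‖x‖ ^ 2) (G z - m • z) z :=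
    (hG z).sub (hasGradientAt_half_mul_norm_sq m z)
  have hLm (a b : E) : ⟪(G a - m • a) - (G b - m • b), a - b⟫ ≤ (L - m) * ‖a - b‖ ^ 2 := by
    rw [sub_sub_sub_comm, ← smul_sub, inner_sub_left, real_inner_smul_left,
      real_inner_self_eq_norm_sq]
    linarith [hL a b]
  have hcoco := (strongConvexOn_iff_convex.1 hF).sq_norm_gradient_sub_le_mul_inner hGm
    (sub_nonneg.2 hmL) hLm x y
  have hstep : (x - (1 / L) • G x) - (y - (1 / L) • G y)
      = (1 / L) • ((L - m) • (x - y) - ((G x - m • x) - (G y - m • y))) := by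
    match_scalars <;> field_simp <;> ring
  rw [hstep, norm_smul, Real.norm_of_nonneg (by positivity)]
  calc 1 / L * ‖(L - m) • (x - y) - ((G x - m • x) - (G y - m • y))‖
      ≤ 1 / L * ((L - m) * ‖x - y‖) := by
        gcongr
        exact norm_smul_sub_le_of_sq_le_inner (sub_nonneg.2 hmL) hcoco
    _ = (1 - m / L) * ‖x - y‖ := by field_simp

end Gradient

theorem stmt_13_general {n : ℕ} (C : Set (EuclideanSpace ℝ (Fin n)))
    (hCconv : Convex ℝ C)
    (f : EuclideanSpace ℝ (Fin n) → ℝ) (α lam : ℝ) (hα : 0 < α)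
    (hlam0 : 0 < lam) (hlamα : lam ≤ α)
    (g : EuclideanSpace ℝ (Fin n) → EuclideanSpace ℝ (Fin n))
    (hg : ∀ x, HasGradientAt f (g x) x)
    (hLip : ∀ x y, ‖g x - g y‖ ≤ α * ‖x - y‖)
    (hsc : StrongConvexOn Set.univ lam f)
    (xstar : EuclideanSpace ℝ (Fin n)) (hxstarC : xstar ∈ C)
    (hxstar : ∀ y ∈ C, f xstar ≤ f y)
    (P : EuclideanSpace ℝ (Fin n) → EuclideanSpace ℝ (Fin n))
    (hP : ∀ z, P z ∈ C ∧ ∀ y ∈ C, ‖P z - z‖ ≤ ‖y - z‖)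
    (E : ℝ) (hE : 0 ≤ E)
    (e : ℕ → EuclideanSpace ℝ (Fin n)) (he : ∀ m, ‖e m‖ ≤ E)
    (x : ℕ → EuclideanSpace ℝ (Fin n))
    (hupd : ∀ m, x (m + 1) = P (x m - (1 / α) • (g (x m) + e m))) :
    ∀ m : ℕ, 1 ≤ m →
      ‖x m - xstar‖ ≤ (1 - lam / α) ^ m * ‖x 0 - xstar‖ + E / lam := by
  have hsmooth (y z : EuclideanSpace ℝ (Fin n)) :
      ⟪g y - g z, y - z⟫ ≤ α * ‖y - z‖ ^ 2 := by
    nlinarith [real_inner_le_norm (g y - g z) (y - z), hLip y z, norm_nonneg (y - z)]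
  have hPvi (z : EuclideanSpace ℝ (Fin n)) :=
    inner_sub_nonpos_of_forall_norm_sub_le hCconv (hP z).1 (hP z).2
  have hxstar_vi : ∀ y ∈ C, ⟪(xstar - (1 / α) • g xstar) - xstar, y - xstar⟫ ≤ 0 := by
    intro y hy
    rw [sub_sub_cancel_left, inner_neg_left, real_inner_smul_left, neg_nonpos]
    exact mul_nonneg (by positivity)
      (IsMinOn.inner_gradient_sub_nonneg hCconv hxstar hxstarC hy (hg xstar))
  have hstep (m : ℕ) : ‖x (m + 1) - xstar‖
      ≤ (1 - lam / α) * ‖x m - xstar‖ + (1 - (1 - lam / α)) * (E / lam) := by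
    calc ‖x (m + 1) - xstar‖
        ≤ ‖(x m - (1 / α) • (g (x m) + e m)) - (xstar - (1 / α) • g xstar)‖ := by
          rw [hupd]
          exact norm_sub_le_of_inner_sub_nonpos (hPvi _ xstar hxstarC) (hxstar_vi _ (hP _).1)
      _ = ‖((x m - (1 / α) • g (x m)) - (xstar - (1 / α) • g xstar)) - (1 / α) • e m‖ := by
          rw [smul_add]; abel_nf
      _ ≤ (1 - lam / α) * ‖x m - xstar‖ + 1 / α * E := by
          refine norm_sub_le_of_le (hsc.norm_gradient_step_sub_le hg hsmooth hα hlamα _ _) ?_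
          rw [norm_smul, Real.norm_of_nonneg (by positivity)]
          gcongr
          exact he m
      _ = (1 - lam / α) * ‖x m - xstar‖ + (1 - (1 - lam / α)) * (E / lam) := by
          field_simp
          ring
  intro m _
  exact le_pow_mul_add_of_le_mul_add (a := fun m => ‖x m - xstar‖)
    (sub_nonneg.2 ((div_le_one hα).2 hlamα)) (div_nonneg hE hlam0.le) hstep m

/-- Linear convergence of inexact projected gradient descent for strongly convex smooth
objectives (abstract form of Theorem 3.6).  `P` is the Euclidean projection onto the
nonempty closed convex set `C` (characterized by `P z ∈ C` minimizing the distance to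
`z` over `C`), `f` has an `α`-Lipschitz gradient `g` and is `λ`-strongly convex with
`0 < λ ≤ α`, `xstar` minimizes `f` over `C`, and the iterates satisfy
`x^{m+1} = P(x^m − (1/α)(g(x^m) + e_m))` with `‖e_m‖ ≤ E`.  Then
`‖x^m − x*‖ ≤ (1 − λ/α)^m ‖x^0 − x*‖ + E/λ` for all `m ≥ 1`. -/
theorem stmt_13 {n : ℕ} (C : Set (EuclideanSpace ℝ (Fin n)))
    (hCne : C.Nonempty) (hCclosed : IsClosed C) (hCconv : Convex ℝ C)
    (f : EuclideanSpace ℝ (Fin n) → ℝ) (α lam : ℝ) (hα : 0 < α)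
    (hlam0 : 0 < lam) (hlamα : lam ≤ α)
    (g : EuclideanSpace ℝ (Fin n) → EuclideanSpace ℝ (Fin n))
    (hg : ∀ x, HasGradientAt f (g x) x)
    (hLip : ∀ x y, ‖g x - g y‖ ≤ α * ‖x - y‖)
    (hsc : StrongConvexOn Set.univ lam f)
    (xstar : EuclideanSpace ℝ (Fin n)) (hxstarC : xstar ∈ C)
    (hxstar : ∀ y ∈ C, f xstar ≤ f y)
    (P : EuclideanSpace ℝ (Fin n) → EuclideanSpace ℝ (Fin n))
    (hP : ∀ z, P z ∈ C ∧ ∀ y ∈ C, ‖P z - z‖ ≤ ‖y - z‖)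
    (E : ℝ) (hE : 0 ≤ E)
    (e : ℕ → EuclideanSpace ℝ (Fin n)) (he : ∀ m, ‖e m‖ ≤ E)
    (x : ℕ → EuclideanSpace ℝ (Fin n)) (hx0 : x 0 ∈ C)
    (hupd : ∀ m, x (m + 1) = P (x m - (1 / α) • (g (x m) + e m))) :
    ∀ m : ℕ, 1 ≤ m →
      ‖x m - xstar‖ ≤ (1 - lam / α) ^ m * ‖x 0 - xstar‖ + E / lam :=
  stmt_13_general C hCconv f α lam hα hlam0 hlamα g hg hLip hsc xstar hxstarC hxstar P hP E hE e he
    x hupd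
end
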